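/- arXiv:1312.6005 — 4 statements merged into one kernel-verified Lean document; each statement's English description precedes it below -/
import Mathlib

section
/- Let K and L be convex bodies in ℝ^n (compact convex with nonempty interior). Then the function x ↦ vol(K ∩ (x − L))^{1/n} is concave on the Minkowski sum K + L, where x − L = {x − y : y ∈ L} and vol denotes Lebesgue measure. -/
/-!
For `x, y ∈ K + L` and `a + b = 1`, convexity of `K` and `L` gives
`a • (K ∩ (x - L)) + b • (K ∩ (y - L)) ⊆ K ∩ ((a • x + b • y) - L)`, so concavity is the
Brunn–Minkowski inequality `a |A|^(1/n) + b |B|^(1/n) ≤ |C|^(1/n)` whenever `a • A + b • B ⊆ C`.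
After rescaling `A` and `B` to unit volume this becomes the multiplicative inequality
`|A|^(1-t) |B|^t ≤ |C|`, i.e. the Prékopa–Leindler inequality for indicator functions.
Prékopa–Leindler holds on `ℝ`: after truncating `f` and `g` and normalising both essential
suprema to `1`, the one-dimensional inequality `|s| + |t| ≤ |s + t|` applied to superlevel sets
and the layer-cake formula give `(1-t) ∫ f + t ∫ g ≤ ∫ h`, and the weighted AM-GM inequality
finishes. It passes to products by Tonelli's theorem, hence to `ℝⁿ` by induction on `n`.
-/

open MeasureTheory Pointwise Set
open scoped ENNReal

namespace Real

theorem volume_smul_of_nonneg {c : ℝ} (hc : 0 ≤ c) (s : Set ℝ) :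
    volume (c • s) = ENNReal.ofReal c * volume s := by
  simpa using Measure.addHaar_smul_of_nonneg volume hc s

theorem volume_add_volume_le_volume_add_of_isCompact {K L : Set ℝ} (hK : IsCompact K)
    (hL : IsCompact L) (hK₀ : K.Nonempty) (hL₀ : L.Nonempty) :
    volume K + volume L ≤ volume (K + L) := by
  set a := sSup K
  set b := sInf L
  have ha : a ∈ K := hK.sSup_mem hK₀
  have hb : b ∈ L := hL.sInf_mem hL₀
  -- `K + b` lies left of `a + b` and `a + L` to its right
  have hinter : (b +ᵥ K) ∩ (a +ᵥ L) ⊆ {a + b} := by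
    rintro - ⟨⟨x, hx, rfl⟩, ⟨y, hy, hxy⟩⟩
    have := le_csSup hK.bddAbove hx
    have := csInf_le hL.bddBelow hy
    simp only [vadd_eq_add] at hxy ⊢
    rw [mem_singleton_iff]
    linarith
  have hunion : (b +ᵥ K) ∪ (a +ᵥ L) ⊆ K + L := by
    rintro - (⟨x, hx, rfl⟩ | ⟨y, hy, rfl⟩)
    · simpa only [vadd_eq_add, add_comm b x] using add_mem_add hx hb
    · exact add_mem_add ha hy
  calc volume K + volume L = volume (b +ᵥ K) + volume (a +ᵥ L) := by
        rw [measure_vadd, measure_vadd]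
    _ = volume ((b +ᵥ K) ∪ (a +ᵥ L)) := by
        rw [← measure_union_add_inter _ (hL.measurableSet.const_vadd a),
          measure_mono_null hinter (measure_singleton _), add_zero]
    _ ≤ volume (K + L) := measure_mono hunion

theorem volume_add_volume_le_volume_add {s t : Set ℝ} (hs : MeasurableSet s)
    (ht : MeasurableSet t) (hs₀ : s.Nonempty) (ht₀ : t.Nonempty) :
    volume s + volume t ≤ volume (s + t) := by
  obtain ⟨x, hx⟩ := hs₀
  obtain ⟨y, hy⟩ := ht₀
  rw [hs.measure_eq_iSup_isCompact, ht.measure_eq_iSup_isCompact]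
  simp only [iSup_and']
  refine ENNReal.biSup_add_biSup_le' ⟨∅, empty_subset _, isCompact_empty⟩
    ⟨∅, empty_subset _, isCompact_empty⟩ fun K ⟨hKs, hK⟩ L ⟨hLt, hL⟩ => ?_
  -- adjoining a point makes the compact sets nonempty without changing their volumes
  calc volume K + volume L = volume (insert x K) + volume (insert y L) := by
        rw [measure_congr (insert_ae_eq_self x K), measure_congr (insert_ae_eq_self y L)]
    _ ≤ volume (insert x K + insert y L) :=
        volume_add_volume_le_volume_add_of_isCompact (hK.insert x) (hL.insert y)
          (insert_nonempty _ _) (insert_nonempty _ _)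
    _ ≤ volume (s + t) :=
        measure_mono (add_subset_add (insert_subset hx hKs) (insert_subset hy hLt))

theorem volume_setOf_ofReal_lt_inter_Ioi (a : ℝ≥0∞) :
    volume ({s : ℝ | ENNReal.ofReal s < a} ∩ Ioi 0) = a := by
  induction a using ENNReal.recTopCoe with
  | top => simp
  | coe r =>
    have : {s : ℝ | ENNReal.ofReal s < r} ∩ Ioi 0 = Ioo 0 (r : ℝ) := by
      ext s
      by_cases hs : 0 < s
      · simp [hs, ENNReal.ofReal_lt_iff_lt_toReal hs.le]
      · simp [hs]
    rw [this, Real.volume_Ioo, sub_zero, ENNReal.ofReal_coe_nnreal]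

end Real

namespace MeasureTheory

theorem measure_setOf_lt_ne_zero_of_lt_essSup {α β : Type*} [MeasurableSpace α]
    [CompleteLinearOrder β] {μ : Measure α} {f : α → β} {c : β} (hc : c < essSup f μ) :
    μ {x | c < f x} ≠ 0 := by
  intro h
  refine hc.not_ge (essSup_le_of_ae_le c ?_)
  simpa only [Filter.EventuallyLE, ae_iff, not_le] using h

theorem lintegral_eq_lintegral_meas_ofReal_lt {α : Type*} [MeasurableSpace α]
    (μ : Measure α) [SFinite μ] {f : α → ℝ≥0∞} (hf : Measurable f) :
    ∫⁻ x, f x ∂μ = ∫⁻ s in Ioi 0, μ {x | ENNReal.ofReal s < f x} := by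
  have hE : MeasurableSet {p : α × ℝ | ENNReal.ofReal p.2 < f p.1} :=
    measurableSet_lt (ENNReal.measurable_ofReal.comp measurable_snd) (hf.comp measurable_fst)
  calc ∫⁻ x, f x ∂μ
      = ∫⁻ x, volume.restrict (Ioi 0) {s : ℝ | ENNReal.ofReal s < f x} ∂μ := by
        refine lintegral_congr fun x => ?_
        rw [Measure.restrict_apply' measurableSet_Ioi, Real.volume_setOf_ofReal_lt_inter_Ioi]
    _ = μ.prod (volume.restrict (Ioi 0)) {p : α × ℝ | ENNReal.ofReal p.2 < f p.1} :=
        (Measure.prod_apply hE).symm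
    _ = ∫⁻ s in Ioi 0, μ {x | ENNReal.ofReal s < f x} := Measure.prod_apply_symm hE

theorem lintegral_eq_iSup_lintegral_min_natCast {α : Type*} [MeasurableSpace α]
    {μ : Measure α} {f : α → ℝ≥0∞} (hf : Measurable f) :
    ∫⁻ x, f x ∂μ = ⨆ n : ℕ, ∫⁻ x, min (f x) n ∂μ := by
  rw [← lintegral_iSup (fun n => hf.min measurable_const)
    fun m n hmn x => min_le_min_left _ (Nat.cast_le.2 hmn)]
  congr with x
  rw [← inf_iSup_eq, ENNReal.iSup_natCast, inf_top_eq]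

end MeasureTheory

namespace ENNReal

theorem geom_mean_le_arith_mean2_weighted {t : ℝ} (ht₀ : 0 < t) (ht₁ : t < 1) (a b : ℝ≥0∞) :
    a ^ (1 - t) * b ^ t ≤ ENNReal.ofReal (1 - t) * a + ENNReal.ofReal t * b := by
  have hpq : (1 - t)⁻¹.HolderConjugate t⁻¹ :=
    Real.HolderConjugate.inv_inv (by linarith) ht₀ (by ring)
  have h := ENNReal.young_inequality (a ^ (1 - t)) (b ^ t) hpq
  rwa [← ENNReal.rpow_mul, ← ENNReal.rpow_mul, mul_inv_cancel₀ (by linarith),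
    mul_inv_cancel₀ ht₀.ne', ENNReal.rpow_one, ENNReal.rpow_one,
    ENNReal.ofReal_inv_of_pos (by linarith), ENNReal.ofReal_inv_of_pos ht₀, div_eq_mul_inv,
    div_eq_mul_inv, inv_inv, inv_inv, mul_comm a, mul_comm b] at h

theorem min_le_rpow_one_sub_mul_rpow {t : ℝ} (ht₀ : 0 ≤ t) (ht₁ : t ≤ 1) (a b : ℝ≥0∞) :
    min a b ≤ a ^ (1 - t) * b ^ t :=
  calc min a b = min a b ^ (1 - t) * min a b ^ t := by
        rw [← ENNReal.rpow_add_of_nonneg _ _ (by linarith) ht₀, sub_add_cancel, ENNReal.rpow_one]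
    _ ≤ a ^ (1 - t) * b ^ t := by gcongr <;> first | linarith | simp

end ENNReal

namespace Real

theorem ofReal_one_sub_mul_volume_add_ofReal_mul_volume_le {t : ℝ} (ht₀ : 0 ≤ t) (ht₁ : t ≤ 1)
    {f g h : ℝ → ℝ≥0∞} (hf : Measurable f) (hg : Measurable g)
    (hfg : essSup f volume = essSup g volume)
    (hfgh : ∀ x y, min (f x) (g y) ≤ h ((1 - t) * x + t * y)) (c : ℝ≥0∞) :
    ENNReal.ofReal (1 - t) * volume {x | c < f x} + ENNReal.ofReal t * volume {y | c < g y}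
      ≤ volume {z | c < h z} := by
  -- below the common essential supremum both superlevel sets are nonempty, above it both are null
  by_cases hc : c < essSup f volume
  · have hA := nonempty_of_measure_ne_zero (measure_setOf_lt_ne_zero_of_lt_essSup hc)
    have hB := nonempty_of_measure_ne_zero (measure_setOf_lt_ne_zero_of_lt_essSup (hfg ▸ hc))
    have hsub : (1 - t) • {x | c < f x} + t • {y | c < g y} ⊆ {z | c < h z} := by
      rintro - ⟨-, ⟨x, hx, rfl⟩, -, ⟨y, hy, rfl⟩, rfl⟩
      exact (lt_min hx hy).trans_le (hfgh x y)
    rw [← volume_smul_of_nonneg (by linarith), ← volume_smul_of_nonneg ht₀]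
    refine (volume_add_volume_le_volume_add ?_ ?_ hA.smul_set hB.smul_set).trans
      (measure_mono hsub)
    · exact (measurableSet_lt measurable_const hf).const_smul₀ _
    · exact (measurableSet_lt measurable_const hg).const_smul₀ _
  · have hf0 : volume {x | c < f x} = 0 :=
      measure_mono_null (fun x hx => (not_lt.1 hc).trans_lt hx) (meas_essSup_lt (f := f))
    have hg0 : volume {y | c < g y} = 0 :=
      measure_mono_null (fun y hy => (hfg ▸ not_lt.1 hc).trans_lt hy) (meas_essSup_lt (f := g))
    simp [hf0, hg0]

theorem ofReal_one_sub_mul_lintegral_add_ofReal_mul_lintegral_le {t : ℝ} (ht₀ : 0 ≤ t)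
    (ht₁ : t ≤ 1) {f g h : ℝ → ℝ≥0∞} (hf : Measurable f) (hg : Measurable g) (hh : Measurable h)
    (hfg : essSup f volume = essSup g volume)
    (hfgh : ∀ x y, min (f x) (g y) ≤ h ((1 - t) * x + t * y)) :
    ENNReal.ofReal (1 - t) * (∫⁻ x, f x) + ENNReal.ofReal t * ∫⁻ y, g y ≤ ∫⁻ z, h z :=
  calc ENNReal.ofReal (1 - t) * (∫⁻ x, f x) + ENNReal.ofReal t * ∫⁻ y, g y
      = ENNReal.ofReal (1 - t) * (∫⁻ s in Ioi 0, volume {x | ENNReal.ofReal s < f x})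
          + ENNReal.ofReal t * ∫⁻ s in Ioi 0, volume {y | ENNReal.ofReal s < g y} := by
        congr 2
        · exact lintegral_eq_lintegral_meas_ofReal_lt volume hf
        · exact lintegral_eq_lintegral_meas_ofReal_lt volume hg
    _ ≤ ∫⁻ s in Ioi 0, (ENNReal.ofReal (1 - t) * volume {x | ENNReal.ofReal s < f x}
          + ENNReal.ofReal t * volume {y | ENNReal.ofReal s < g y}) := by
        rw [← lintegral_const_mul' _ _ ENNReal.ofReal_ne_top,
          ← lintegral_const_mul' _ _ ENNReal.ofReal_ne_top]
        exact le_lintegral_add _ _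
    _ ≤ ∫⁻ s in Ioi 0, volume {z | ENNReal.ofReal s < h z} := lintegral_mono fun s =>
        ofReal_one_sub_mul_volume_add_ofReal_mul_volume_le ht₀ ht₁ hf hg hfg hfgh _
    _ = ∫⁻ z, h z := (lintegral_eq_lintegral_meas_ofReal_lt volume hh).symm

theorem lintegral_rpow_mul_lintegral_rpow_le_of_essSup_ne_top {t : ℝ} (ht₀ : 0 < t)
    (ht₁ : t < 1) {f g h : ℝ → ℝ≥0∞} (hf : Measurable f) (hg : Measurable g) (hh : Measurable h)
    (hf_top : essSup f volume ≠ ∞) (hg_top : essSup g volume ≠ ∞)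
    (hfgh : ∀ x y, f x ^ (1 - t) * g y ^ t ≤ h ((1 - t) * x + t * y)) :
    (∫⁻ x, f x) ^ (1 - t) * (∫⁻ y, g y) ^ t ≤ ∫⁻ z, h z := by
  set M := essSup f volume
  set N := essSup g volume
  rcases eq_or_ne M 0 with hM | hM
  · simp [lintegral_congr_ae (ENNReal.essSup_eq_zero_iff.1 hM),
      ENNReal.zero_rpow_of_pos (sub_pos.2 ht₁)]
  rcases eq_or_ne N 0 with hN | hN
  · simp [lintegral_congr_ae (ENNReal.essSup_eq_zero_iff.1 hN), ENNReal.zero_rpow_of_pos ht₀]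
  -- normalise `f` and `g` to essential supremum `1`
  set d := M⁻¹ ^ (1 - t) * N⁻¹ ^ t
  have hd₀ : d ≠ 0 := mul_ne_zero
    (ENNReal.rpow_pos (ENNReal.inv_pos.2 hf_top) (ENNReal.inv_ne_top.2 hM)).ne'
    (ENNReal.rpow_pos (ENNReal.inv_pos.2 hg_top) (ENNReal.inv_ne_top.2 hN)).ne'
  have hd_top : d ≠ ∞ := ENNReal.mul_ne_top
    (ENNReal.rpow_ne_top_of_nonneg (sub_nonneg.2 ht₁.le) (ENNReal.inv_ne_top.2 hM))
    (ENNReal.rpow_ne_top_of_nonneg ht₀.le (ENNReal.inv_ne_top.2 hN))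
  have hscale : ∀ a b : ℝ≥0∞, (M⁻¹ * a) ^ (1 - t) * (N⁻¹ * b) ^ t = d * (a ^ (1 - t) * b ^ t) := by
    intro a b
    rw [ENNReal.mul_rpow_of_nonneg _ _ (by linarith), ENNReal.mul_rpow_of_nonneg _ _ ht₀.le]
    ring
  have hmin : ∀ x y, min (M⁻¹ * f x) (N⁻¹ * g y) ≤ d * h ((1 - t) * x + t * y) := fun x y =>
    calc min (M⁻¹ * f x) (N⁻¹ * g y) ≤ (M⁻¹ * f x) ^ (1 - t) * (N⁻¹ * g y) ^ t :=
          ENNReal.min_le_rpow_one_sub_mul_rpow ht₀.le ht₁.le _ _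
      _ ≤ d * h ((1 - t) * x + t * y) := by rw [hscale]; gcongr; exact hfgh x y
  have hess : essSup (fun x => M⁻¹ * f x) volume = essSup (fun y => N⁻¹ * g y) volume := by
    rw [ENNReal.essSup_const_mul, ENNReal.essSup_const_mul, ENNReal.inv_mul_cancel hM hf_top,
      ENNReal.inv_mul_cancel hN hg_top]
  have key := ofReal_one_sub_mul_lintegral_add_ofReal_mul_lintegral_le ht₀.le ht₁.le
    (hf.const_mul _) (hg.const_mul _) (hh.const_mul _) hess hmin
  rw [lintegral_const_mul _ hf, lintegral_const_mul _ hg, lintegral_const_mul _ hh] at key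
  rw [← ENNReal.mul_le_mul_iff_right hd₀ hd_top, ← hscale]
  exact (ENNReal.geom_mean_le_arith_mean2_weighted ht₀ ht₁ _ _).trans key

end Real

namespace MeasureTheory.Measure

def PrekopaLeindler {E : Type*} [MeasurableSpace E] [AddCommMonoid E] [Module ℝ E]
    (μ : Measure E) : Prop :=
  ∀ ⦃t : ℝ⦄, 0 < t → t < 1 → ∀ ⦃f g h : E → ℝ≥0∞⦄, Measurable f → Measurable g → Measurable h →
    (∀ x y, f x ^ (1 - t) * g y ^ t ≤ h ((1 - t) • x + t • y)) →
    (∫⁻ x, f x ∂μ) ^ (1 - t) * (∫⁻ y, g y ∂μ) ^ t ≤ ∫⁻ z, h z ∂μ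

namespace PrekopaLeindler

variable {E F : Type*} [MeasurableSpace E] [AddCommMonoid E] [Module ℝ E]
  [MeasurableSpace F] [AddCommMonoid F] [Module ℝ F] {μ : Measure E} {ν : Measure F}

theorem prod [SFinite ν] (hμ : μ.PrekopaLeindler) (hν : ν.PrekopaLeindler) :
    (μ.prod ν).PrekopaLeindler := by
  intro t ht₀ ht₁ f g h hf hg hh hfgh
  rw [lintegral_prod f hf.aemeasurable, lintegral_prod g hg.aemeasurable,
    lintegral_prod h hh.aemeasurable]
  refine hμ ht₀ ht₁ hf.lintegral_prod_right' hg.lintegral_prod_right' hh.lintegral_prod_right'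
    fun x₁ y₁ => ?_
  exact hν ht₀ ht₁ (hf.comp measurable_prodMk_left) (hg.comp measurable_prodMk_left)
    (hh.comp measurable_prodMk_left) fun x₂ y₂ => hfgh (x₁, x₂) (y₁, y₂)

theorem map (hμ : μ.PrekopaLeindler) (e : E →ₗ[ℝ] F) (he : MeasurePreserving e μ ν) :
    ν.PrekopaLeindler := by
  intro t ht₀ ht₁ f g h hf hg hh hfgh
  rw [← he.lintegral_comp hf, ← he.lintegral_comp hg, ← he.lintegral_comp hh]
  refine hμ ht₀ ht₁ (hf.comp he.measurable) (hg.comp he.measurable) (hh.comp he.measurable)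
    fun x y => ?_
  simpa using hfgh (e x) (e y)

theorem measure_rpow_mul_measure_rpow_le (hμ : μ.PrekopaLeindler) {t : ℝ} (ht₀ : 0 < t)
    (ht₁ : t < 1) {A B C : Set E} (hA : MeasurableSet A) (hB : MeasurableSet B)
    (hABC : (1 - t) • A + t • B ⊆ C) : μ A ^ (1 - t) * μ B ^ t ≤ μ C := by
  have key := hμ ht₀ ht₁ (measurable_one.indicator hA) (measurable_one.indicator hB)
    (measurable_one.indicator (measurableSet_toMeasurable μ C)) fun x y => by
      by_cases hx : x ∈ A
      · by_cases hy : y ∈ B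
        · have hxy := subset_toMeasurable μ C
            (hABC (add_mem_add (smul_mem_smul_set hx) (smul_mem_smul_set hy)))
          simp [hx, hy, hxy]
        · simp [hy, ENNReal.zero_rpow_of_pos ht₀]
      · simp [hx, ENNReal.zero_rpow_of_pos (sub_pos.2 ht₁)]
  rwa [lintegral_indicator_one hA, lintegral_indicator_one hB,
    lintegral_indicator_one (measurableSet_toMeasurable μ C), measure_toMeasurable] at key

theorem measureReal_rpow_mul_measureReal_rpow_le (hμ : μ.PrekopaLeindler) {t : ℝ} (ht₀ : 0 < t)
    (ht₁ : t < 1) {A B C : Set E} (hA : MeasurableSet A) (hB : MeasurableSet B)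
    (hC : μ C ≠ ∞) (hABC : (1 - t) • A + t • B ⊆ C) :
    μ.real A ^ (1 - t) * μ.real B ^ t ≤ μ.real C := by
  simpa only [measureReal_def, ENNReal.toReal_mul, ENNReal.toReal_rpow] using
    ENNReal.toReal_mono hC (hμ.measure_rpow_mul_measure_rpow_le ht₀ ht₁ hA hB hABC)

end PrekopaLeindler

end MeasureTheory.Measure

theorem Real.prekopaLeindler_volume : (volume : Measure ℝ).PrekopaLeindler := by
  intro t ht₀ ht₁ f g h hf hg hh hfgh
  -- truncating `f` and `g` makes their essential suprema finite; then let the levels tend to `∞`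
  have hess : ∀ {u : ℝ → ℝ≥0∞} (n : ℕ), essSup (fun x => min (u x) n) volume ≠ ∞ := fun n =>
    ne_top_of_le_ne_top (ENNReal.natCast_ne_top n)
      (essSup_le_of_ae_le _ (ae_of_all _ fun _ => min_le_right _ _))
  have htrunc : ∀ m n : ℕ,
      (∫⁻ x, min (f x) m) ^ (1 - t) * (∫⁻ y, min (g y) n) ^ t ≤ ∫⁻ z, h z := fun m n =>
    lintegral_rpow_mul_lintegral_rpow_le_of_essSup_ne_top ht₀ ht₁ (hf.min measurable_const)
      (hg.min measurable_const) hh (hess m) (hess n) fun x y =>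
        (mul_le_mul' (ENNReal.rpow_le_rpow (min_le_left _ _) (sub_nonneg.2 ht₁.le))
          (ENNReal.rpow_le_rpow (min_le_left _ _) ht₀.le)).trans (hfgh x y)
  have hrpow : ∀ {p : ℝ} (hp : 0 < p) (a : ℕ → ℝ≥0∞), (⨆ n, a n) ^ p = ⨆ n, a n ^ p :=
    fun hp a => (ENNReal.orderIsoRpow _ hp).map_iSup a
  rw [lintegral_eq_iSup_lintegral_min_natCast hf, lintegral_eq_iSup_lintegral_min_natCast hg,
    hrpow (sub_pos.2 ht₁), hrpow ht₀, ENNReal.iSup_mul]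
  exact iSup_le fun m => (ENNReal.mul_iSup _ _).trans_le (iSup_le (htrunc m))

theorem MeasureTheory.prekopaLeindler_volume_pi :
    ∀ n : ℕ, (volume : Measure (Fin n → ℝ)).PrekopaLeindler
  | 0 => by
    intro t _ _ f g h _ _ _ hfgh
    simpa only [Measure.volume_pi_eq_dirac 0, lintegral_dirac, smul_zero, add_zero] using hfgh 0 0
  | n + 1 => by
    have he : MeasurePreserving (Fin.consLinearEquiv ℝ fun _ : Fin (n + 1) => ℝ) := by
      convert (volume_preserving_piFinSuccAbove (fun _ : Fin (n + 1) => ℝ) 0).symm using 1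
      ext p : 1
      exact (Fin.insertNth_zero' p.1 p.2).symm
    exact (Real.prekopaLeindler_volume.prod (prekopaLeindler_volume_pi n)).map _ he

theorem EuclideanSpace.prekopaLeindler_volume (n : ℕ) :
    (volume : Measure (EuclideanSpace ℝ (Fin n))).PrekopaLeindler :=
  (prekopaLeindler_volume_pi n).map (WithLp.linearEquiv 2 ℝ (Fin n → ℝ)).symm.toLinearMap
    (PiLp.volume_preserving_toLp (Fin n))

theorem Real.mul_rpow_inv_natCast_le_of_pow_mul_le {n : ℕ} (hn : n ≠ 0) {r x y : ℝ} (hr : 0 ≤ r)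
    (hx : 0 ≤ x) (h : r ^ n * x ≤ y) : r * x ^ (n : ℝ)⁻¹ ≤ y ^ (n : ℝ)⁻¹ :=
  calc r * x ^ (n : ℝ)⁻¹ = (r ^ n * x) ^ (n : ℝ)⁻¹ := by
        rw [Real.mul_rpow (by positivity) hx, Real.pow_rpow_inv_natCast hr hn]
    _ ≤ y ^ (n : ℝ)⁻¹ := Real.rpow_le_rpow (by positivity) h (by positivity)

namespace MeasureTheory.Measure

open Module

variable {E : Type*} [NormedAddCommGroup E] [NormedSpace ℝ E] [MeasurableSpace E] [BorelSpace E]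
  [FiniteDimensional ℝ E] {μ : Measure E} [μ.IsAddHaarMeasure]

theorem addHaar_real_smul_of_nonneg {r : ℝ} (hr : 0 ≤ r) (s : Set E) :
    μ.real (r • s) = r ^ finrank ℝ E * μ.real s := by
  simp [measureReal_def, addHaar_smul_of_nonneg μ hr, ENNReal.toReal_ofReal (pow_nonneg hr _)]

theorem pow_finrank_mul_measureReal_le_of_add_smul_subset {r : ℝ} (hr : 0 ≤ r) {s B C : Set E}
    (hs : s.Nonempty) (hC : μ C ≠ ∞) (h : s + r • B ⊆ C) :
    r ^ finrank ℝ E * μ.real B ≤ μ.real C := by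
  obtain ⟨x, hx⟩ := hs
  calc r ^ finrank ℝ E * μ.real B = μ.real (x +ᵥ r • B) := by
        rw [← addHaar_real_smul_of_nonneg hr]
        exact congrArg ENNReal.toReal (measure_vadd μ x (r • B)).symm
    _ ≤ μ.real C := measureReal_mono ((Set.vadd_set_subset_vadd hx).trans h) hC

namespace PrekopaLeindler

theorem mul_measureReal_rpow_add_mul_measureReal_rpow_le_of_pos (hμ : μ.PrekopaLeindler)
    (hn : finrank ℝ E ≠ 0) {a b : ℝ} (ha : 0 < a) (hb : 0 < b) {A B C : Set E}
    (hA : MeasurableSet A) (hB : MeasurableSet B) (hA₀ : 0 < μ.real A) (hB₀ : 0 < μ.real B)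
    (hC : μ C ≠ ∞) (hABC : a • A + b • B ⊆ C) :
    a * μ.real A ^ (finrank ℝ E : ℝ)⁻¹ + b * μ.real B ^ (finrank ℝ E : ℝ)⁻¹
      ≤ μ.real C ^ (finrank ℝ E : ℝ)⁻¹ := by
  set n := finrank ℝ E
  set α := μ.real A ^ (n : ℝ)⁻¹
  set β := μ.real B ^ (n : ℝ)⁻¹
  have hα : 0 < α := Real.rpow_pos_of_pos hA₀ _
  have hβ : 0 < β := Real.rpow_pos_of_pos hB₀ _
  set S := a * α + b * β
  have hS : 0 < S := by positivity
  -- rescale `A` and `B` to unit volume and `C` by the same factor `S`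
  set t := b * β / S
  have ht₀ : 0 < t := by positivity
  have ht₁ : t < 1 := by rw [div_lt_one hS]; linarith [mul_pos ha hα]
  have hsub : (1 - t) • (α⁻¹ • A) + t • (β⁻¹ • B) ⊆ S⁻¹ • C := by
    have e₁ : (1 - t) * α⁻¹ = S⁻¹ * a := by simp only [t, S]; field_simp; ring
    have e₂ : t * β⁻¹ = S⁻¹ * b := by simp only [t]; field_simp
    rw [smul_smul, smul_smul, e₁, e₂, ← smul_smul, ← smul_smul, ← smul_add]
    exact Set.smul_set_mono hABC
  have hunit : ∀ {X : Set E}, 0 < μ.real X → μ.real ((μ.real X ^ (n : ℝ)⁻¹)⁻¹ • X) = 1 :=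
    fun {X} hX => by
      rw [addHaar_real_smul_of_nonneg (by positivity), inv_pow,
        Real.rpow_inv_natCast_pow hX.le hn, inv_mul_cancel₀ hX.ne']
  have hC' : μ (S⁻¹ • C) ≠ ∞ := by
    rw [addHaar_smul]
    exact ENNReal.mul_ne_top ENNReal.ofReal_ne_top hC
  have key := hμ.measureReal_rpow_mul_measureReal_rpow_le ht₀ ht₁ (hA.const_smul₀ _)
    (hB.const_smul₀ _) hC' hsub
  rw [hunit hA₀, hunit hB₀, Real.one_rpow, Real.one_rpow, one_mul,
    addHaar_real_smul_of_nonneg (inv_nonneg.2 hS.le), inv_pow, ← div_eq_inv_mul,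
    one_le_div (by positivity)] at key
  simpa using Real.mul_rpow_inv_natCast_le_of_pow_mul_le hn hS.le zero_le_one (by simpa using key)

theorem mul_measureReal_rpow_add_mul_measureReal_rpow_le (hμ : μ.PrekopaLeindler)
    (hn : finrank ℝ E ≠ 0) {a b : ℝ} (ha : 0 < a) (hb : 0 < b) {A B C : Set E}
    (hA : MeasurableSet A) (hB : MeasurableSet B) (hA₀ : A.Nonempty) (hB₀ : B.Nonempty)
    (hC : μ C ≠ ∞) (hABC : a • A + b • B ⊆ C) :
    a * μ.real A ^ (finrank ℝ E : ℝ)⁻¹ + b * μ.real B ^ (finrank ℝ E : ℝ)⁻¹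
      ≤ μ.real C ^ (finrank ℝ E : ℝ)⁻¹ := by
  have hp : (finrank ℝ E : ℝ)⁻¹ ≠ 0 := by positivity
  rcases (measureReal_nonneg : 0 ≤ μ.real A).eq_or_lt with hA0 | hA0
  · rw [← hA0, Real.zero_rpow hp, mul_zero, zero_add]
    exact Real.mul_rpow_inv_natCast_le_of_pow_mul_le hn hb.le measureReal_nonneg
      (pow_finrank_mul_measureReal_le_of_add_smul_subset hb.le hA₀.smul_set hC hABC)
  rcases (measureReal_nonneg : 0 ≤ μ.real B).eq_or_lt with hB0 | hB0
  · rw [← hB0, Real.zero_rpow hp, mul_zero, add_zero]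
    exact Real.mul_rpow_inv_natCast_le_of_pow_mul_le hn ha.le measureReal_nonneg
      (pow_finrank_mul_measureReal_le_of_add_smul_subset ha.le hB₀.smul_set hC
        ((add_comm (b • B) (a • A)).trans_subset hABC))
  exact hμ.mul_measureReal_rpow_add_mul_measureReal_rpow_le_of_pos hn ha hb hA hB hA0 hB0 hC hABC

end PrekopaLeindler

end MeasureTheory.Measure

theorem Convex.smul_inter_image_sub_add_smul_inter_image_sub_subset {E : Type*} [AddCommGroup E]
    [Module ℝ E] {K L : Set E} (hK : Convex ℝ K) (hL : Convex ℝ L) {a b : ℝ} (ha : 0 ≤ a)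
    (hb : 0 ≤ b) (hab : a + b = 1) (x y : E) :
    a • (K ∩ (fun z => x - z) '' L) + b • (K ∩ (fun z => y - z) '' L)
      ⊆ K ∩ (fun z => (a • x + b • y) - z) '' L := by
  rintro - ⟨-, ⟨u, ⟨huK, l, hl, rfl⟩, rfl⟩, -, ⟨v, ⟨hvK, m, hm, rfl⟩, rfl⟩, rfl⟩
  refine ⟨hK huK hvK ha hb hab, a • l + b • m, hL hl hm ha hb hab, ?_⟩
  simp only [smul_sub]
  abel

theorem concavity_of_volume_of_intersections_general {n : ℕ} (hn : 0 < n)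
    (K L : Set (EuclideanSpace ℝ (Fin n)))
    (hK : Convex ℝ K) (hKc : IsCompact K)
    (hL : Convex ℝ L) (hLc : IsCompact L) :
    ConcaveOn ℝ (K + L)
      (fun x => (volume (K ∩ ((fun y => x - y) '' L))).toReal ^ ((n : ℝ)⁻¹)) := by
  have hmeas : ∀ x, MeasurableSet (K ∩ (fun y => x - y) '' L) := fun x =>
    hKc.measurableSet.inter (hLc.image (continuous_sub_left x)).measurableSet
  have hne : ∀ x ∈ K + L, (K ∩ (fun y => x - y) '' L).Nonempty := by
    rintro - ⟨k, hk, l, hl, rfl⟩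
    exact ⟨k, hk, l, hl, add_sub_cancel_right k l⟩
  refine ⟨hK.add hL, fun x hx y hy a b ha hb hab => ?_⟩
  rcases ha.eq_or_lt with rfl | ha
  · obtain rfl : b = 1 := by linarith
    simp
  rcases hb.eq_or_lt with rfl | hb
  · obtain rfl : a = 1 := by linarith
    simp
  simpa [finrank_euclideanSpace_fin, measureReal_def] using
    (EuclideanSpace.prekopaLeindler_volume n).mul_measureReal_rpow_add_mul_measureReal_rpow_le
      (by simpa using hn.ne') ha hb (hmeas x) (hmeas y) (hne x hx) (hne y hy)
      ((measure_mono inter_subset_left).trans_lt hKc.measure_lt_top).ne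
      (hK.smul_inter_image_sub_add_smul_inter_image_sub_subset hL ha.le hb.le hab x y)

theorem concavity_of_volume_of_intersections {n : ℕ} (hn : 0 < n)
    (K L : Set (EuclideanSpace ℝ (Fin n)))
    (hK : Convex ℝ K) (hKc : IsCompact K) (hKi : (interior K).Nonempty)
    (hL : Convex ℝ L) (hLc : IsCompact L) (hLi : (interior L).Nonempty) :
    ConcaveOn ℝ (K + L)
      (fun x => (volume (K ∩ ((fun y => x - y) '' L))).toReal ^ ((n : ℝ)⁻¹)) :=
  concavity_of_volume_of_intersections_general hn K L hK hKc hL hLc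
end

section
/- Let K and L be convex bodies in ℝ^n with vol(K ∩ (−L)) = M(K,L) = max_z vol(K ∩ (z − L)). Then for every θ ∈ [0,1), vol(K +_θ L) ≥ (1 − θ^{1/n})^n · vol(K + L). -/
open MeasureTheory Pointwise ENNReal

/-- The `θ`-convolution body of `K` and `L`, normalized so that the maximum of
`z ↦ vol(K ∩ (z − L))` is `vol(K ∩ (−L))`. -/
noncomputable def thetaConv {n : ℕ} (K L : Set (EuclideanSpace ℝ (Fin n))) (θ : ℝ) :
    Set (EuclideanSpace ℝ (Fin n)) :=
  {x ∈ K + L |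
    ENNReal.ofReal θ * volume (K ∩ -L) ≤ volume (K ∩ ((fun y => x - y) '' L))}

theorem volume_convolution_body_lower_bound {n : ℕ} (hn : 0 < n)
    (K L : Set (EuclideanSpace ℝ (Fin n)))
    (hK : Convex ℝ K) (hKc : IsCompact K) (hKi : (interior K).Nonempty)
    (hL : Convex ℝ L) (hLc : IsCompact L) (hLi : (interior L).Nonempty)
    (hM : ∀ z : EuclideanSpace ℝ (Fin n),
      volume (K ∩ ((fun y => z - y) '' L)) ≤ volume (K ∩ -L))
    (θ : ℝ) (h₀ : 0 ≤ θ) (hθ : θ < 1) :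
    ENNReal.ofReal ((1 - θ ^ ((n:ℝ)⁻¹)) ^ n) * volume (K + L) ≤
      volume (thetaConv K L θ) := by
  set t : ℝ := θ ^ ((n:ℝ)⁻¹) with ht
  have ht0 : 0 ≤ t := Real.rpow_nonneg h₀ _
  have ht1 : t ≤ 1 := Real.rpow_le_one h₀ hθ.le (by positivity)
  have htn : t ^ n = θ := by
    rw [ht, ← Real.rpow_natCast (θ ^ ((n:ℝ)⁻¹)) n, ← Real.rpow_mul h₀,
      inv_mul_cancel₀ (by exact_mod_cast hn.ne'), Real.rpow_one]
  -- K ∩ (-L) is nonempty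
  obtain ⟨k₀, hk₀⟩ := hKi
  obtain ⟨l₀, hl₀⟩ := hLi
  have hB : (K ∩ -L).Nonempty := by
    apply nonempty_of_measure_ne_zero (μ := volume)
    have hpos : 0 < volume (K ∩ ((fun y => (k₀ + l₀) - y) '' L)) := by
      have hsub : interior K ∩ ({k₀ + l₀} - interior L) ⊆
          K ∩ ((fun y => (k₀ + l₀) - y) '' L) := by
        rw [← Set.singleton_sub]
        exact Set.inter_subset_inter interior_subset
          (Set.sub_subset_sub_left interior_subset)
      refine lt_of_lt_of_le ?_ (measure_mono hsub)
      refine (isOpen_interior.inter isOpen_interior.sub_left).measure_pos volume ⟨k₀, hk₀, ?_⟩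
      exact ⟨k₀ + l₀, rfl, l₀, hl₀, by simp⟩
    exact (lt_of_lt_of_le hpos (hM _)).ne'
  obtain ⟨b₀, hb₀K, hb₀L⟩ := hB
  have h0mem : (0 : EuclideanSpace ℝ (Fin n)) ∈ K + L :=
    ⟨b₀, hb₀K, -b₀, Set.mem_neg.mp hb₀L, by abel⟩
  have hKL : Convex ℝ (K + L) := hK.add hL
  have hsub2 : (1 - t) • (K + L) ⊆ thetaConv K L θ := by
    rintro _ ⟨x, hx, rfl⟩
    obtain ⟨k, hk, l, hl, rfl⟩ := hx
    have hx' : k + l ∈ K + L := ⟨k, hk, l, hl, rfl⟩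
    refine ⟨?_, ?_⟩
    · have := hKL (a := 1 - t) (b := t) hx' h0mem (sub_nonneg.2 ht1) ht0 (by ring)
      simpa using this
    · have key : ((1 - t) • k) +ᵥ (t • (K ∩ -L)) ⊆
          K ∩ ((fun y => (1 - t) • (k + l) - y) '' L) := by
        rintro _ ⟨_, ⟨b, hb, rfl⟩, rfl⟩
        refine ⟨?_, t • (-b) + (1 - t) • l, hL (a := t) (b := 1 - t) (Set.mem_neg.mp hb.2) hl ht0 (sub_nonneg.2 ht1) (by ring), by simp only [vadd_eq_add]; module⟩
        have := hK (a := t) (b := 1 - t) hb.1 hk ht0 (sub_nonneg.2 ht1) (by ring)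
        simpa [add_comm] using this
      have heq : ENNReal.ofReal θ * volume (K ∩ -L)
          = volume (((1 - t) • k) +ᵥ (t • (K ∩ -L))) := by
        rw [measure_vadd, Measure.addHaar_smul, finrank_euclideanSpace_fin, abs_pow,
          abs_of_nonneg ht0, htn]
      rw [heq]
      exact measure_mono key
  calc ENNReal.ofReal ((1 - t) ^ n) * volume (K + L)
      = volume ((1 - t) • (K + L)) := by
        rw [Measure.addHaar_smul, finrank_euclideanSpace_fin, abs_pow,
          abs_of_nonneg (by linarith : (0:ℝ) ≤ 1 - t)]
    _ ≤ volume (thetaConv K L θ) := measure_mono hsub2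
end

section
/- Let K and L be convex bodies in ℝ^n with vol(K ∩ (−L)) = M(K,L) = max_z vol(K ∩ (z − L)). Then M(K,L)·vol(K + L) ≤ binom(2n, n)·vol(K)·vol(L) (the Rogers–Shephard inequality for two bodies). -/
open MeasureTheory Pointwise ENNReal

/-!
For `y ∈ K + L` and `t ∈ [0, 1]`, convexity puts a homothetic copy of `K ∩ -L` of ratio `1 - t`
inside `K ∩ (t • y - L)`, so `(1 - t)ⁿ vol (K ∩ -L) ≤ vol (K ∩ (t • y - L))`.
Measure the cone `{(t, t • y) | t ∈ [0, 1], y ∈ K + L}` with `ν ⊗ vol`, where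
`ν = n (1 - t)ⁿ⁻¹ dt`. Slicing at fixed `t` gives `vol (K + L) ∫₀¹ tⁿ dν = vol (K + L) / C(2n, n)`.
At fixed `x`, the slice lies in `[τ, 1]` where `x = τ • y` with `y ∈ K + L`, so its `ν`-mass is
at most `(1 - τ)ⁿ ≤ vol (K ∩ (x - L)) / vol (K ∩ -L)`; and `∫ vol (K ∩ (x - L)) dx = vol K vol L`.
This is the layer-cake argument of Rogers and Shephard after the substitution `θ = (1 - t)ⁿ`.
-/

open Set Module
open scoped Nat

theorem integral_pow_mul_one_sub_pow (a b : ℕ) :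
    ∫ t in (0 : ℝ)..1, t ^ a * (1 - t) ^ b = (a ! * b ! / (a + b + 1)! : ℝ) := by
  have hbeta : ((∫ t in (0 : ℝ)..1, t ^ a * (1 - t) ^ b : ℝ) : ℂ) =
      Complex.betaIntegral (a + 1) (b + 1) := by
    rw [← intervalIntegral.integral_ofReal, Complex.betaIntegral]
    refine intervalIntegral.integral_congr fun t _ => ?_
    push_cast
    simp only [add_sub_cancel_right]
    norm_cast
  rw [Complex.betaIntegral_eq_Gamma_mul_div _ _ (by simp; positivity) (by simp; positivity),
    show (a + 1 : ℂ) + (b + 1) = ((a + b + 1 : ℕ) : ℂ) + 1 by push_cast; ring,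
    Complex.Gamma_nat_eq_factorial, Complex.Gamma_nat_eq_factorial,
    Complex.Gamma_nat_eq_factorial] at hbeta
  apply Complex.ofReal_injective
  rw [hbeta]
  push_cast
  ring

noncomputable def tailPowMeasure (n : ℕ) : Measure ℝ :=
  volume.withDensity fun t => ENNReal.ofReal (n * (1 - t) ^ (n - 1))

instance (n : ℕ) : SFinite (tailPowMeasure n) :=
  Measure.withDensity.instSFinite

theorem tailPowMeasure_Icc {n : ℕ} (hn : 0 < n) {τ : ℝ} (hτ : τ ≤ 1) :
    tailPowMeasure n (Icc τ 1) = ENNReal.ofReal ((1 - τ) ^ n) := by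
  have hderiv (t : ℝ) : HasDerivAt (fun s : ℝ => -(1 - s) ^ n) (n * (1 - t) ^ (n - 1)) t := by
    simpa using (((hasDerivAt_id' t).const_sub (1 : ℝ)).fun_pow n).fun_neg
  rw [tailPowMeasure, withDensity_apply _ measurableSet_Icc,
    ← ofReal_integral_eq_lintegral_ofReal, integral_Icc_eq_integral_Ioc,
    ← intervalIntegral.integral_of_le hτ,
    intervalIntegral.integral_eq_sub_of_hasDerivAt (fun t _ => hderiv t)
      ((by fun_prop : Continuous _).intervalIntegrable _ _)]
  · simp [zero_pow hn.ne']
  · exact (by fun_prop : Continuous _).integrableOn_Icc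
  · filter_upwards [ae_restrict_mem measurableSet_Icc] with t ht
    have : 0 ≤ 1 - t := by linarith [ht.2]
    positivity

theorem setLIntegral_pow_tailPowMeasure {n : ℕ} (hn : 0 < n) :
    ∫⁻ t in Icc 0 1, ENNReal.ofReal (t ^ n) ∂tailPowMeasure n = ((2 * n).choose n : ℝ≥0∞)⁻¹ := by
  have hint : ∫ t in (0 : ℝ)..1, n * (t ^ n * (1 - t) ^ (n - 1)) = ((2 * n).choose n : ℝ)⁻¹ := by
    rw [intervalIntegral.integral_const_mul, integral_pow_mul_one_sub_pow]
    obtain ⟨m, rfl⟩ : ∃ m, n = m + 1 := ⟨n - 1, by omega⟩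
    rw [show m + 1 + (m + 1 - 1) + 1 = 2 * (m + 1) by omega, Nat.add_sub_cancel,
      ← Nat.choose_mul_factorial_mul_factorial (show m + 1 ≤ 2 * (m + 1) by omega),
      show 2 * (m + 1) - (m + 1) = m + 1 by omega, Nat.factorial_succ]
    push_cast
    field_simp
  rw [tailPowMeasure, setLIntegral_withDensity_eq_setLIntegral_mul _ (by fun_prop) (by fun_prop)
    measurableSet_Icc, ← ENNReal.ofReal_natCast, ← ENNReal.ofReal_inv_of_pos
      (Nat.cast_pos.mpr (Nat.choose_pos (by omega))),
    ← hint, intervalIntegral.integral_of_le zero_le_one, ← integral_Icc_eq_integral_Ioc,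
    ofReal_integral_eq_lintegral_ofReal]
  · refine setLIntegral_congr_fun measurableSet_Icc fun t ht => ?_
    have : 0 ≤ 1 - t := by linarith [ht.2]
    rw [Pi.mul_apply, ← ENNReal.ofReal_mul (by positivity)]
    ring_nf
  · exact (by fun_prop : Continuous _).integrableOn_Icc
  · filter_upwards [ae_restrict_mem measurableSet_Icc] with t ht
    have : 0 ≤ 1 - t := by linarith [ht.2]
    have : 0 ≤ t := ht.1
    positivity

theorem lintegral_measure_inter_image_sub {G : Type*} [MeasurableSpace G] [AddCommGroup G]
    [MeasurableAdd₂ G] [MeasurableNeg G] (μ : Measure G) [SFinite μ] [μ.IsAddRightInvariant]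
    {K L : Set G} (hK : MeasurableSet K) (hL : MeasurableSet L) :
    ∫⁻ x, μ (K ∩ (fun y => x - y) '' L) ∂μ = μ K * μ L := by
  have hshear := measurePreserving_sub_prod (G := G) μ μ
  have hD : MeasurableSet ((fun z : G × G => (z.1 - z.2, z.2)) ⁻¹' (L ×ˢ K)) :=
    hshear.measurable (hL.prod hK)
  rw [mul_comm, ← Measure.prod_prod, ← hshear.measure_preimage (hL.prod hK).nullMeasurableSet,
    Measure.prod_apply hD]
  refine lintegral_congr fun x => congrArg μ ?_
  ext y
  simp [image_sub_left, neg_add_eq_sub, and_comm]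

theorem homothety_image_inter_neg_subset {E : Type*} [AddCommGroup E] [Module ℝ E]
    {K L : Set E} (hK : Convex ℝ K) (hL : Convex ℝ L) {a b : E} (ha : a ∈ K) (hb : b ∈ L)
    {t : ℝ} (ht : t ∈ Icc (0 : ℝ) 1) :
    AffineMap.homothety a (1 - t) '' (K ∩ -L) ⊆ K ∩ (fun u => t • (a + b) - u) '' L := by
  rintro _ ⟨w, ⟨hwK, hwL⟩, rfl⟩
  have hw : AffineMap.homothety a (1 - t) w = t • a + (1 - t) • w := by
    simp only [AffineMap.homothety_apply, vsub_eq_sub, vadd_eq_add]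
    module
  rw [hw, image_sub_left]
  refine ⟨hK ha hwK ht.1 (by linarith [ht.2]) (by ring), ?_⟩
  rw [mem_preimage, show -(t • a + (1 - t) • w) + t • (a + b) = t • b + (1 - t) • -w by module]
  exact hL hb hwL ht.1 (by linarith [ht.2]) (by ring)

section NormedSpace

variable {E : Type*} [NormedAddCommGroup E] [NormedSpace ℝ E]

def coneOver (S : Set E) : Set (ℝ × E) :=
  (fun p : ℝ × E => (p.1, p.1 • p.2)) '' (Icc 0 1 ×ˢ S)

theorem mem_coneOver {S : Set E} {t : ℝ} {x : E} :
    (t, x) ∈ coneOver S ↔ t ∈ Icc (0 : ℝ) 1 ∧ x ∈ t • S := by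
  simp [coneOver, mem_smul_set, and_assoc]

theorem IsCompact.coneOver {S : Set E} (hS : IsCompact S) : IsCompact (coneOver S) :=
  (isCompact_Icc.prod hS).image (by fun_prop)

theorem mul_tailPowMeasure_coneOver_slice_le {n : ℕ} (hn : 0 < n) {S : Set E}
    (hS : IsCompact S) {f : E → ℝ≥0∞} {M : ℝ≥0∞}
    (hf : ∀ y ∈ S, ∀ t ∈ Icc (0 : ℝ) 1, ENNReal.ofReal ((1 - t) ^ n) * M ≤ f (t • y)) (x : E) :
    M * tailPowMeasure n ((fun t => (t, x)) ⁻¹' coneOver S) ≤ f x := by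
  set T := (fun t : ℝ => (t, x)) ⁻¹' coneOver S
  rcases T.eq_empty_or_nonempty with hT | hT
  · simp [hT]
  have hT01 : T ⊆ Icc 0 1 := fun t ht => (mem_coneOver.1 (show (t, x) ∈ coneOver S from ht)).1
  have hTc : IsCompact T :=
    isCompact_Icc.of_isClosed_subset (hS.coneOver.isClosed.preimage (by fun_prop)) hT01
  obtain ⟨τ, hτT, hτ_le⟩ := hTc.exists_isLeast hT
  obtain ⟨hτ, y, hy, rfl⟩ := mem_coneOver.1 (show (τ, x) ∈ coneOver S from hτT)
  calc M * tailPowMeasure n T ≤ M * tailPowMeasure n (Icc τ 1) := by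
        gcongr
        exact fun t ht => ⟨hτ_le ht, (hT01 ht).2⟩
    _ = ENNReal.ofReal ((1 - τ) ^ n) * M := by rw [tailPowMeasure_Icc hn hτ.2, mul_comm]
    _ ≤ f (τ • y) := hf y hy τ hτ

variable [MeasurableSpace E] [BorelSpace E] [FiniteDimensional ℝ E] (μ : Measure E)
  [μ.IsAddHaarMeasure]

theorem one_sub_pow_mul_measure_inter_neg_le {K L : Set E} (hK : Convex ℝ K) (hL : Convex ℝ L)
    {y : E} (hy : y ∈ K + L) {t : ℝ} (ht : t ∈ Icc (0 : ℝ) 1) :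
    ENNReal.ofReal ((1 - t) ^ finrank ℝ E) * μ (K ∩ -L) ≤
      μ (K ∩ (fun u => t • y - u) '' L) := by
  obtain ⟨a, ha, b, hb, rfl⟩ := hy
  have h1t : 0 ≤ 1 - t := by linarith [ht.2]
  calc ENNReal.ofReal ((1 - t) ^ finrank ℝ E) * μ (K ∩ -L)
      = μ (AffineMap.homothety a (1 - t) '' (K ∩ -L)) := by
        rw [Measure.addHaar_image_homothety, abs_of_nonneg (by positivity)]
    _ ≤ _ := measure_mono (homothety_image_inter_neg_subset hK hL ha hb ht)

theorem mul_measure_le_choose_mul_lintegral (hn : 0 < finrank ℝ E) {S : Set E}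
    (hS : IsCompact S) {f : E → ℝ≥0∞} {M : ℝ≥0∞}
    (hf : ∀ y ∈ S, ∀ t ∈ Icc (0 : ℝ) 1,
      ENNReal.ofReal ((1 - t) ^ finrank ℝ E) * M ≤ f (t • y)) :
    M * μ S ≤ ((2 * finrank ℝ E).choose (finrank ℝ E) : ℝ≥0∞) * ∫⁻ x, f x ∂μ := by
  set n := finrank ℝ E
  set C : ℝ≥0∞ := ↑((2 * n).choose n)
  have hC0 : C ≠ 0 := Nat.cast_ne_zero.2 (Nat.choose_pos (by omega)).ne'
  set ν := tailPowMeasure n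
  have hG : MeasurableSet (coneOver S) := hS.coneOver.isClosed.measurableSet
  have hlower : C⁻¹ * μ S ≤ (ν.prod μ) (coneOver S) := by
    rw [Measure.prod_apply hG]
    calc C⁻¹ * μ S = ∫⁻ t in Icc 0 1, ENNReal.ofReal (t ^ n) * μ S ∂ν := by
          rw [lintegral_mul_const _ (by fun_prop), setLIntegral_pow_tailPowMeasure hn]
      _ = ∫⁻ t in Icc 0 1, μ (Prod.mk t ⁻¹' coneOver S) ∂ν := by
          refine setLIntegral_congr_fun measurableSet_Icc fun t ht => ?_
          have hslice : Prod.mk t ⁻¹' coneOver S = t • S := by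
            ext x; simp [mem_coneOver, ht]
          rw [hslice, Measure.addHaar_smul, abs_of_nonneg (pow_nonneg ht.1 n)]
      _ ≤ ∫⁻ t, μ (Prod.mk t ⁻¹' coneOver S) ∂ν := setLIntegral_le_lintegral _ _
  calc M * μ S = C * (M * (C⁻¹ * μ S)) := by
        rw [mul_left_comm, ← mul_assoc C, ENNReal.mul_inv_cancel hC0 (natCast_ne_top _), one_mul]
    _ ≤ C * (M * (ν.prod μ) (coneOver S)) := by gcongr
    _ = C * (M * ∫⁻ x, ν ((fun t => (t, x)) ⁻¹' coneOver S) ∂μ) := by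
        rw [Measure.prod_apply_symm hG]
    _ ≤ C * ∫⁻ x, f x ∂μ := by
        gcongr
        exact (lintegral_const_mul_le _ _).trans
          (lintegral_mono (mul_tailPowMeasure_coneOver_slice_le hn hS hf))

end NormedSpace

theorem rogers_shephard_two_bodies_general {n : ℕ} (hn : 0 < n)
    (K L : Set (EuclideanSpace ℝ (Fin n)))
    (hK : Convex ℝ K) (hKc : IsCompact K)
    (hL : Convex ℝ L) (hLc : IsCompact L) :
    volume (K ∩ -L) * volume (K + L) ≤
      ((2 * n).choose n : ℝ≥0∞) * (volume K * volume L) := by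
  have h := mul_measure_le_choose_mul_lintegral volume (by simpa using hn) (hKc.add hLc)
    (f := fun x => volume (K ∩ (fun y => x - y) '' L))
    fun y hy t ht => one_sub_pow_mul_measure_inter_neg_le volume hK hL hy ht
  rwa [finrank_euclideanSpace_fin, lintegral_measure_inter_image_sub volume
    hKc.measurableSet hLc.measurableSet] at h

theorem rogers_shephard_two_bodies {n : ℕ} (hn : 0 < n)
    (K L : Set (EuclideanSpace ℝ (Fin n)))
    (hK : Convex ℝ K) (hKc : IsCompact K) (hKi : (interior K).Nonempty)
    (hL : Convex ℝ L) (hLc : IsCompact L) (hLi : (interior L).Nonempty)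
    (hM : ∀ z : EuclideanSpace ℝ (Fin n),
      volume (K ∩ ((fun y => z - y) '' L)) ≤ volume (K ∩ -L)) :
    volume (K ∩ -L) * volume (K + L) ≤
      ((2 * n).choose n : ℝ≥0∞) * (volume K * volume L) :=
  rogers_shephard_two_bodies_general hn K L hK hKc hL hLc
end

section
/- Let K = conv{0, e₁, …, e_n} ⊆ ℝ^n be the standard simplex. Then for every x ∈ K − K, the set K ∩ (x + K) is a homothet of K: K ∩ (x + K) = a(x) + λ(x)K, where λ(x) = (1/2)(2 − |Σᵢ xᵢ| − Σᵢ |xᵢ|). -/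
/-!
Writing the simplex as `K = {y | 0 ≤ y, ∑ yᵢ ≤ 1}`, its translate is
`x + K = {y | x ≤ y, ∑ yᵢ ≤ 1 + ∑ xᵢ}`, so `K ∩ (x + K) = {y | x⁺ ≤ y, ∑ yᵢ ≤ min 1 (1 + ∑ xᵢ)}`,
which is `x⁺ + λK` with `λ = min 1 (1 + ∑ xᵢ) - ∑ xᵢ⁺ = 1 - |∑ xᵢ| / 2 - ∑ |xᵢ| / 2`.
For `x ∈ K - K` the intersection is nonempty, which forces `λ ≥ 0`, and only then is
`{z | 0 ≤ z, ∑ zᵢ ≤ λ}` the dilate `λK`.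
-/

open Pointwise

def cornerSimplex (ι : Type*) [Fintype ι] (t : ℝ) : Set (ι → ℝ) :=
  {y | 0 ≤ y ∧ ∑ i, y i ≤ t}

section
variable {ι : Type*} [Fintype ι]

theorem convex_cornerSimplex (t : ℝ) : Convex ℝ (cornerSimplex ι t) :=
  (convex_Ici 0).inter <| convex_halfSpace_le (f := fun y : ι → ℝ => ∑ i, y i)
    ⟨fun _ _ => Finset.sum_add_distrib, fun _ _ => (Finset.mul_sum ..).symm⟩ t

theorem convexHull_insert_zero_range_single [DecidableEq ι] :
    convexHull ℝ (insert 0 (Set.range fun i : ι => Pi.single i (1 : ℝ))) = cornerSimplex ι 1 := by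
  refine (convexHull_min ?_ (convex_cornerSimplex 1)).antisymm fun y ⟨hy0, hy1⟩ => ?_
  · rintro _ (rfl | ⟨i, rfl⟩)
    · exact ⟨le_rfl, by simp⟩
    · exact ⟨Pi.single_nonneg.2 zero_le_one, by simp⟩
  · have hcomb := (convex_convexHull ℝ (insert 0 (Set.range fun i : ι => Pi.single i (1 : ℝ)))).sum_mem
      (t := Finset.univ) (w := fun o : Option ι => o.elim (1 - ∑ i, y i) y)
      (z := fun o => o.elim 0 fun i => Pi.single i 1)
      (by rintro (_ | i) _; exacts [sub_nonneg.2 hy1, hy0 i]) (by simp [Fintype.sum_option])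
      (by rintro (_ | i) _ <;> apply subset_convexHull <;> simp)
    rw [pi_eq_sum_univ' y]
    simpa [Fintype.sum_option] using hcomb

theorem cornerSimplex_nonempty_iff {t : ℝ} : (cornerSimplex ι t).Nonempty ↔ 0 ≤ t :=
  ⟨fun ⟨_, hy0, hyt⟩ => (Finset.sum_nonneg fun i _ => hy0 i).trans hyt,
    fun ht => ⟨0, le_rfl, by simpa using ht⟩⟩

theorem cornerSimplex_zero : cornerSimplex ι 0 = 0 :=
  Set.eq_singleton_iff_unique_mem.2 ⟨⟨le_rfl, by simp⟩, fun _ ⟨hy0, hy⟩ =>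
    (Fintype.sum_eq_zero_iff_of_nonneg hy0).1 (hy.antisymm (Finset.sum_nonneg fun i _ => hy0 i))⟩

theorem smul_cornerSimplex_one {t : ℝ} (ht : 0 ≤ t) :
    t • cornerSimplex ι 1 = cornerSimplex ι t := by
  rcases ht.eq_or_lt with rfl | ht
  · rw [Set.zero_smul_set (cornerSimplex_nonempty_iff.2 zero_le_one), cornerSimplex_zero]
  · ext y
    rw [Set.mem_smul_set_iff_inv_smul_mem₀ ht.ne']
    simp only [cornerSimplex, Set.mem_ofPred, Pi.smul_apply, smul_eq_mul, ← Finset.mul_sum,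
      inv_mul_le_iff₀ ht, mul_one, smul_nonneg_iff_nonneg_of_pos_left (inv_pos.2 ht)]

theorem vadd_cornerSimplex (a : ι → ℝ) (t : ℝ) :
    a +ᵥ cornerSimplex ι t = {y | a ≤ y ∧ ∑ i, y i ≤ ∑ i, a i + t} := by
  ext y
  simp only [Set.mem_vadd_set_iff_neg_vadd_mem, cornerSimplex, Set.mem_ofPred, vadd_eq_add,
    neg_add_eq_sub, sub_nonneg, Pi.sub_apply, Finset.sum_sub_distrib, sub_le_iff_le_add']

theorem cornerSimplex_inter_vadd (t : ℝ) (x : ι → ℝ) :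
    cornerSimplex ι t ∩ (x +ᵥ cornerSimplex ι t) =
      (x ⊔ 0) +ᵥ cornerSimplex ι (min t (∑ i, x i + t) - ∑ i, max (x i) 0) := by
  rw [vadd_cornerSimplex, vadd_cornerSimplex]
  ext y
  simp only [cornerSimplex, Set.mem_inter_iff, Set.mem_ofPred, sup_le_iff, Pi.sup_apply,
    Pi.zero_apply, add_sub_cancel, le_min_iff]
  tauto

theorem min_sub_sum_max_eq (x : ι → ℝ) :
    min 1 (∑ i, x i + 1) - ∑ i, max (x i) 0 = 1 / 2 * (2 - |∑ i, x i| - ∑ i, |x i|) := by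
  have hmax (r : ℝ) : max r 0 = (r + |r|) / 2 := by
    rcases le_total r 0 with h | h
    · rw [max_eq_right h, abs_of_nonpos h]; ring
    · rw [max_eq_left h, abs_of_nonneg h]; ring
  have hmin (r : ℝ) : min 1 (r + 1) = 1 + (r - |r|) / 2 := by
    rcases le_total r 0 with h | h
    · rw [min_eq_right (by linarith), abs_of_nonpos h]; ring
    · rw [min_eq_left (by linarith), abs_of_nonneg h]; ring
  simp only [hmax, hmin, ← Finset.sum_div, Finset.sum_add_distrib]
  ring
end

theorem simplex_intersection_homothet_general {n : ℕ}
    (K : Set (Fin n → ℝ))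
    (hK : K = convexHull ℝ (insert 0 (Set.range fun i : Fin n => Pi.single i (1:ℝ)))) :
    ∀ x ∈ K - K, ∃ a : Fin n → ℝ,
      K ∩ (x +ᵥ K) =
        a +ᵥ ((1 / 2) * (2 - |∑ i, x i| - ∑ i, |x i|)) • K := by
  rintro x ⟨u, hu, v, hv, rfl⟩
  rw [convexHull_insert_zero_range_single] at hK
  subst hK
  have hne : (cornerSimplex (Fin n) 1 ∩ ((u - v) +ᵥ cornerSimplex (Fin n) 1)).Nonempty :=
    ⟨u, hu, v, hv, sub_add_cancel u v⟩
  rw [cornerSimplex_inter_vadd, Set.vadd_set_nonempty, cornerSimplex_nonempty_iff] at hne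
  refine ⟨(u - v) ⊔ 0, ?_⟩
  rw [cornerSimplex_inter_vadd, ← min_sub_sum_max_eq, smul_cornerSimplex_one hne]

theorem simplex_intersection_homothet {n : ℕ} (hn : 0 < n)
    (K : Set (Fin n → ℝ))
    (hK : K = convexHull ℝ (insert 0 (Set.range fun i : Fin n => Pi.single i (1:ℝ)))) :
    ∀ x ∈ K - K, ∃ a : Fin n → ℝ,
      K ∩ (x +ᵥ K) =
        a +ᵥ ((1 / 2) * (2 - |∑ i, x i| - ∑ i, |x i|)) • K :=
  simplex_intersection_homothet_general K hK
end
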